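/- Permanent as a monomial coefficient of a bilinear form power: Let A be an m×m complex matrix, n ∈ ℕ, and p, q ∈ ℕ^m with |p| = |q| = n. Then the coefficient of x^p y^q in the polynomial (x^T A y)^n = (Σ_{i,j} x_i a_{ij} y_j)^n in the 2m variables x_1,…,x_m,y_1,…,y_m equals (n! / (p! q!)) · Per(A_{p,q}); equivalently, Per(A_{p,q}) = (p! q! / n!) · [x^p y^q] (x^T A y)^n. -/

import Mathlib

/-!
Expanding `(xᵀ A y)ⁿ` gives one term `∏ₖ a_{g k, h k} x^{fiberCard g} y^{fiberCard h}` for each pair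
of words `g h : Fin n → Fin m`. The words with letter counts `p` form the orbit of a single word `r`
under `Sₙ`, and each of them is reached by exactly `p!` permutations, the size of the stabilizer
of `r`. Hence `p! q!` times the coefficient of `x^p y^q` is `∑_{σ, π} ∏ₖ a_{r (σ k), c (π k)}`,
which is `n!` times the permanent of `(a_{r k, c l})_{k,l}`; for `r`, `c` listing each index `i`
exactly `p i`, resp. `q i`, times, that matrix is `A_{p,q}`.
-/

open BigOperators Matrix

/-- The list of row indices of `A_{p,·}`: each index `i` repeated `p i` times, in order. -/
def repList {m : ℕ} (p : Fin m → ℕ) : List (Fin m) :=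
  (List.finRange m).flatMap fun i => List.replicate (p i) i

lemma repList_length {m : ℕ} (p : Fin m → ℕ) : (repList p).length = ∑ i, p i := by
  simp only [repList, List.length_flatMap, Fin.sum_univ_def]
  congr 1
  apply List.map_congr_left
  intro i _
  simp

/-- The matrix `A_{p,q}`: row `i` repeated `p i` times, column `j` repeated `q j` times. -/
def repMat {m : ℕ} (A : Matrix (Fin m) (Fin m) ℂ) (p q : Fin m → ℕ) :
    Matrix (Fin (∑ i, p i)) (Fin (∑ j, q j)) ℂ :=
  Matrix.of fun r c =>
    A ((repList p).get (Fin.cast (repList_length p).symm r))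
      ((repList q).get (Fin.cast (repList_length q).symm c))

/-- `Per(A_{p,q})`; by convention `0` when the matrix is not square. -/
noncomputable def perRep {m : ℕ} (A : Matrix (Fin m) (Fin m) ℂ) (p q : Fin m → ℕ) : ℂ :=
  if h : (∑ i, p i) = (∑ j, q j) then
    (Matrix.of fun r c : Fin (∑ i, p i) => repMat A p q r (Fin.cast h c)).permanent
  else 0

open Finset MvPolynomial

section FiberCard

variable {α α' β : Type*} [Fintype α] [Fintype α'] [DecidableEq β]

def fiberCard (g : α → β) (b : β) : ℕ := Fintype.card {a // g a = b}

lemma fiberCard_comp_equiv (g : α → β) (e : α' ≃ α) : fiberCard (g ∘ e) = fiberCard g :=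
  funext fun _ => Fintype.card_congr (e.subtypeEquiv fun _ => Iff.rfl)

lemma exists_perm_comp_eq_of_fiberCard_eq {g h : α → β} (hgh : fiberCard g = fiberCard h) :
    ∃ π : Equiv.Perm α, h ∘ π = g := by
  have e (b : β) : {a // g a = b} ≃ {a // h a = b} := Fintype.equivOfCardEq (congrFun hgh b)
  exact ⟨Equiv.ofFiberEquiv e, funext (Equiv.ofFiberEquiv_map e)⟩

lemma fiberCard_vector_get {n : ℕ} (v : List.Vector β n) (b : β) :
    fiberCard v.get b = v.toList.count b :=
  (Fintype.card_subtype _).trans (Fin.card_filter_univ_eq_vector_get_eq_count b v)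

variable [DecidableEq α] [Fintype β]

lemma card_perm_comp_eq {g h : α → β} (hgh : fiberCard g = fiberCard h) :
    #{π : Equiv.Perm α | h ∘ π = g} = ∏ b, (fiberCard h b).factorial := by
  obtain ⟨π₀, rfl⟩ := exists_perm_comp_eq_of_fiberCard_eq hgh
  rw [← Fintype.card_subtype]
  refine (Fintype.card_congr ((Equiv.mulRight π₀⁻¹).subtypeEquiv fun π => ?_)).trans
    (DomMulAct.stabilizer_card h)
  simp only [Equiv.coe_mulRight, Equiv.Perm.coe_mul]
  constructor
  · intro hπ
    rw [← Function.comp_assoc, hπ, Function.comp_assoc]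
    simp
  · intro hπ
    conv_rhs => rw [← hπ]
    ext
    simp

lemma sum_perm_comp {M : Type*} [AddCommMonoid M] (h : α → β) (F : (α → β) → M) :
    ∑ π : Equiv.Perm α, F (h ∘ π) =
      (∏ b, (fiberCard h b).factorial) • ∑ g with fiberCard g = fiberCard h, F g := by
  have himage : univ.image (fun π : Equiv.Perm α => h ∘ π) =
      ({g | fiberCard g = fiberCard h} : Finset (α → β)) := by
    ext g
    simp only [mem_image, mem_univ, true_and, mem_filter]
    constructor
    · rintro ⟨π, rfl⟩
      exact fiberCard_comp_equiv h π
    · exact exists_perm_comp_eq_of_fiberCard_eq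
  rw [Finset.sum_comp, himage, smul_sum]
  exact sum_congr rfl fun g hg => by rw [card_perm_comp_eq (mem_filter.mp hg).2]

end FiberCard

section BilinearForm

variable {R ι : Type*} [CommSemiring R] [Fintype ι] [DecidableEq ι]

lemma prod_bilinear_eq_monomial {κ : Type*} [Fintype κ] (A : Matrix ι ι R) (g h : κ → ι) :
    ∏ k, X (Sum.inl (g k)) * C (A (g k) (h k)) * X (Sum.inr (h k)) =
      monomial (Finsupp.equivFunOnFinite.symm (Sum.elim (fiberCard g) (fiberCard h)))
        (∏ k, A (g k) (h k) : R) := by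
  have hfactor (k : κ) : X (Sum.inl (g k)) * C (A (g k) (h k)) * X (Sum.inr (h k)) =
      monomial (Finsupp.single (Sum.inl (g k)) 1 + Finsupp.single (Sum.inr (h k)) 1)
        (A (g k) (h k)) := by
    rw [X, X, C_apply, monomial_mul, monomial_mul, one_mul, mul_one, add_zero]
  have hexp : ∑ k, (Finsupp.single (Sum.inl (g k)) 1 + Finsupp.single (Sum.inr (h k)) 1) =
      Finsupp.equivFunOnFinite.symm (Sum.elim (fiberCard g) (fiberCard h)) := by
    ext (i | j) <;> simp [Finsupp.single_apply, fiberCard, Fintype.card_subtype]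
  simp_rw [hfactor, ← monomial_sum_prod, hexp]

lemma bilinear_pow_eq_sum (A : Matrix ι ι R) (n : ℕ) :
    (∑ i, ∑ j, X (Sum.inl i) * C (A i j) * X (Sum.inr j) : MvPolynomial (ι ⊕ ι) R) ^ n =
      ∑ g : Fin n → ι, ∑ h : Fin n → ι,
        monomial (Finsupp.equivFunOnFinite.symm (Sum.elim (fiberCard g) (fiberCard h)))
          (∏ k, A (g k) (h k)) := by
  simp_rw [Fintype.sum_pow, Fintype.prod_sum, prod_bilinear_eq_monomial]

lemma coeff_bilinear_pow (A : Matrix ι ι R) (n : ℕ) (P Q : ι → ℕ) :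
    coeff (Finsupp.equivFunOnFinite.symm (Sum.elim P Q))
        ((∑ i, ∑ j, X (Sum.inl i) * C (A i j) * X (Sum.inr j) : MvPolynomial (ι ⊕ ι) R) ^ n) =
      ∑ g : Fin n → ι with fiberCard g = P, ∑ h : Fin n → ι with fiberCard h = Q,
        ∏ k, A (g k) (h k) := by
  simp only [bilinear_pow_eq_sum, coeff_sum, coeff_monomial, EmbeddingLike.apply_eq_iff_eq,
    Sum.elim_eq_iff]
  simp_rw [sum_filter, ite_and, sum_ite_irrel, sum_const_zero]

lemma factorial_mul_coeff_bilinear_pow (A : Matrix ι ι R) {n : ℕ} (r c : Fin n → ι) :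
    ((∏ i, ((fiberCard r i).factorial : R)) * ∏ j, ((fiberCard c j).factorial : R)) *
        coeff (Finsupp.equivFunOnFinite.symm (Sum.elim (fiberCard r) (fiberCard c)))
          ((∑ i, ∑ j, X (Sum.inl i) * C (A i j) * X (Sum.inr j) : MvPolynomial (ι ⊕ ι) R) ^ n) =
      n.factorial * (Matrix.of fun k l => A (r k) (c l)).permanent := by
  set M : Matrix (Fin n) (Fin n) R := Matrix.of fun k l => A (r k) (c l)
  have hperm (g : Fin n → ι) (F : (Fin n → ι) → R) :
      (∏ b, ((fiberCard g b).factorial : R)) * ∑ h with fiberCard h = fiberCard g, F h =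
        ∑ π : Equiv.Perm (Fin n), F (g ∘ π) := by
    rw [sum_perm_comp, nsmul_eq_mul, Nat.cast_prod]
  calc _ = (∏ i, ((fiberCard r i).factorial : R)) * ∑ g with fiberCard g = fiberCard r,
        (∏ j, ((fiberCard c j).factorial : R)) * ∑ h with fiberCard h = fiberCard c,
          ∏ k, A (g k) (h k) := by
        rw [coeff_bilinear_pow, mul_assoc, mul_sum]
    _ = ∑ σ : Equiv.Perm (Fin n), ∑ π : Equiv.Perm (Fin n), ∏ k, A (r (σ k)) (c (π k)) := by
        simp_rw [hperm]
        rfl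
    _ = ∑ π : Equiv.Perm (Fin n), (M.submatrix id π).permanent := sum_comm
    _ = n.factorial * M.permanent := by
        simp_rw [permanent_permute_rows, sum_const, card_univ, Fintype.card_perm,
          Fintype.card_fin, nsmul_eq_mul]

end BilinearForm

lemma count_repList {m : ℕ} (p : Fin m → ℕ) (i : Fin m) : (repList p).count i = p i := by
  rw [repList, List.count_flatMap, Function.comp_def,
    ← Fin.sum_univ_def (fun j => (List.replicate (p j) j).count i)]
  simp [List.count_replicate]

def repVector {m : ℕ} (p : Fin m → ℕ) : List.Vector (Fin m) (∑ i, p i) :=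
  ⟨repList p, repList_length p⟩

lemma fiberCard_repVector_get {m : ℕ} (p : Fin m → ℕ) : fiberCard (repVector p).get = p :=
  funext fun i => (fiberCard_vector_get _ i).trans (count_repList p i)

lemma perRep_eq_permanent {m : ℕ} (A : Matrix (Fin m) (Fin m) ℂ) (p q : Fin m → ℕ)
    (h : ∑ i, p i = ∑ j, q j) :
    perRep A p q = (Matrix.of fun k l =>
      A ((repVector p).get k) (((repVector q).get ∘ finCongr h) l)).permanent := by
  rw [perRep, dif_pos h]
  rfl

/-- **Permanent as a monomial coefficient of a bilinear form power.** -/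
theorem permanent_coeff_bilinear_power (m n : ℕ) (A : Matrix (Fin m) (Fin m) ℂ)
    (p q : Fin m → ℕ) (hp : ∑ i, p i = n) (hq : ∑ j, q j = n) :
    MvPolynomial.coeff (Finsupp.equivFunOnFinite.symm (Sum.elim p q))
        ((∑ i, ∑ j, MvPolynomial.X (Sum.inl i) * MvPolynomial.C (A i j) *
            MvPolynomial.X (Sum.inr j) : MvPolynomial (Fin m ⊕ Fin m) ℂ) ^ n) =
      (Nat.factorial n : ℂ) /
          ((∏ i, (Nat.factorial (p i) : ℂ)) * ∏ j, (Nat.factorial (q j) : ℂ)) *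
        perRep A p q ∧
    perRep A p q =
      ((∏ i, (Nat.factorial (p i) : ℂ)) * ∏ j, (Nat.factorial (q j) : ℂ)) /
          (Nat.factorial n : ℂ) *
        MvPolynomial.coeff (Finsupp.equivFunOnFinite.symm (Sum.elim p q))
          ((∑ i, ∑ j, MvPolynomial.X (Sum.inl i) * MvPolynomial.C (A i j) *
              MvPolynomial.X (Sum.inr j) : MvPolynomial (Fin m ⊕ Fin m) ℂ) ^ n) := by
  subst hp
  have key := factorial_mul_coeff_bilinear_pow A (repVector p).get
    ((repVector q).get ∘ finCongr hq.symm)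
  rw [fiberCard_repVector_get, fiberCard_comp_equiv, fiberCard_repVector_get,
    ← perRep_eq_permanent] at key
  have hfact (k : ℕ) : (k.factorial : ℂ) ≠ 0 := Nat.cast_ne_zero.mpr k.factorial_ne_zero
  have hP : (∏ i, ((p i).factorial : ℂ)) ≠ 0 := prod_ne_zero_iff.mpr fun i _ => hfact _
  have hQ : (∏ j, ((q j).factorial : ℂ)) ≠ 0 := prod_ne_zero_iff.mpr fun j _ => hfact _
  have hN := hfact (∑ i, p i)
  constructor <;> field_simp
  · linear_combination key
  · linear_combination -key
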